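/- Every subtle cardinal is a strong limit cardinal: if δ is a subtle cardinal, then for every cardinal λ < δ one has 2^λ < δ. -/

import Mathlib

/-- `C` is a club in the ordinal `δ`: `C ⊆ δ`, `C` is unbounded in `δ`, and `C` is
closed in `δ` (every nonzero supremum below `δ` of a nonempty subset of `C` is in `C`). -/
def IsClubIn (C : Set Ordinal) (δ : Ordinal) : Prop :=
  C ⊆ Set.Iio δ ∧
  (∀ α < δ, ∃ β ∈ C, α ≤ β) ∧
  (∀ S : Set Ordinal, S ⊆ C → S.Nonempty → sSup S < δ → sSup S ≠ 0 → sSup S ∈ C)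

/-- A cardinal `δ` is subtle if for every club `C ⊆ δ` and every sequence
`⟨A_α : α ∈ C⟩` with `A_α ⊆ α`, there are `α < β` in `C` with `A_α = A_β ∩ α`. -/
def IsSubtle (δ : Cardinal) : Prop :=
  ∀ C : Set Ordinal, IsClubIn C δ.ord →
    ∀ A : Ordinal → Set Ordinal, (∀ α ∈ C, A α ⊆ Set.Iio α) →
      ∃ α ∈ C, ∃ β ∈ C, α < β ∧ A α = A β ∩ Set.Iio α

/-! If `λ < δ ≤ 2 ^ λ`, code each `α < δ` injectively by a subset `A α ⊆ λ`. Subtlety is a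
limit-ordinal property (the clubs `∅` in `0` and `{a}` in `a + 1` have no two points), so
`(λ, δ)` is a club; on it `A α ⊆ λ ⊆ α`, and subtlety yields `α < β` with
`A α = A β ∩ α = A β`, contradicting injectivity. -/

open Order

theorem isClubIn_empty_zero : IsClubIn ∅ 0 :=
  ⟨Set.empty_subset _, fun _ hα => (not_lt_zero hα).elim,
    fun _ hS hne => absurd (Set.subset_empty_iff.mp hS) hne.ne_empty⟩

theorem isClubIn_singleton_succ (a : Ordinal) : IsClubIn {a} (succ a) := by
  refine ⟨by simp, fun α hα => ⟨a, rfl, lt_succ_iff.mp hα⟩, fun S hS hne _ _ => ?_⟩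
  rw [(Set.Nonempty.subset_singleton_iff hne).mp hS, csSup_singleton]
  rfl

theorem isClubIn_Ioo {γ δ : Ordinal} (hδ : IsSuccLimit δ) (hγ : γ < δ) :
    IsClubIn (Set.Ioo γ δ) δ := by
  refine ⟨fun _ hx => hx.2, fun α hα => ?_, fun S hS ⟨s, hs⟩ hlt _ => ?_⟩
  · exact ⟨max α (succ γ), ⟨(lt_succ γ).trans_le (le_max_right _ _),
      max_lt hα (hδ.succ_lt hγ)⟩, le_max_left _ _⟩
  · have hbdd : BddAbove S := ⟨δ, fun x hx => (hS hx).2.le⟩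
    exact ⟨(hS hs).1.trans_le (le_csSup hbdd hs), hlt⟩

theorem IsSubtle.exists_lt_of_isClubIn {δ : Cardinal} (h : IsSubtle δ) {C : Set Ordinal}
    (hC : IsClubIn C δ.ord) : ∃ α ∈ C, ∃ β ∈ C, α < β := by
  obtain ⟨α, hα, β, hβ, hαβ, -⟩ := h C hC (fun _ => ∅) (fun _ _ => Set.empty_subset _)
  exact ⟨α, hα, β, hβ, hαβ⟩

theorem IsSubtle.isSuccLimit_ord {δ : Cardinal} (h : IsSubtle δ) : IsSuccLimit δ.ord := by
  rcases Ordinal.zero_or_succ_or_isSuccLimit δ.ord with h0 | ⟨a, ha⟩ | hlim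
  · obtain ⟨α, hα, -⟩ := h.exists_lt_of_isClubIn (h0 ▸ isClubIn_empty_zero)
    exact hα.elim
  · obtain ⟨α, rfl, β, rfl, hαβ⟩ := h.exists_lt_of_isClubIn (ha ▸ isClubIn_singleton_succ a)
    exact (lt_irrefl _ hαβ).elim
  · exact hlim

theorem IsSubtle.exists_lt_eq_of_subset_Iio {δ : Cardinal} (h : IsSubtle δ) {γ : Ordinal}
    (hγ : γ < δ.ord) (A : Ordinal → Set Ordinal) (hA : ∀ α, A α ⊆ Set.Iio γ) :
    ∃ α β, α < β ∧ β < δ.ord ∧ A α = A β := by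
  have hsub : ∀ α ∈ Set.Ioo γ δ.ord, A α ⊆ Set.Iio α :=
    fun α hα => (hA α).trans (Set.Iio_subset_Iio hα.1.le)
  obtain ⟨α, hα, β, hβ, hαβ, hAαβ⟩ :=
    h _ (isClubIn_Ioo h.isSuccLimit_ord hγ) A hsub
  refine ⟨α, β, hαβ, hβ.2, hAαβ.trans (Set.inter_eq_left.mpr ?_)⟩
  exact (hA β).trans (Set.Iio_subset_Iio hα.1.le)

theorem IsSubtle.not_injective {δ : Cardinal} (h : IsSubtle δ) {γ : Ordinal} (hγ : γ < δ.ord)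
    (F : Set.Iio δ.ord → Set (Set.Iio γ)) : ¬ Function.Injective F := by
  intro hF
  let A : Ordinal → Set Ordinal := fun α =>
    if hα : α < δ.ord then Subtype.val '' F ⟨α, hα⟩ else ∅
  have hA : ∀ α, A α ⊆ Set.Iio γ := by
    intro α
    unfold A
    split_ifs
    · rintro _ ⟨x, -, rfl⟩
      exact x.2
    · exact Set.empty_subset _
  obtain ⟨α, β, hαβ, hβ, hAαβ⟩ := h.exists_lt_eq_of_subset_Iio hγ A hA
  have hα : α < δ.ord := hαβ.trans hβ
  have hFαβ : F ⟨α, hα⟩ = F ⟨β, hβ⟩ := by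
    simp only [A, dif_pos hα, dif_pos hβ] at hAαβ
    exact Subtype.val_injective.image_injective hAαβ
  exact hαβ.ne (congrArg Subtype.val (hF hFαβ))

/-- Every subtle cardinal is a strong limit: `2 ^ λ < δ` for every cardinal `λ < δ`. -/
theorem subtle_isStrongLimit (δ : Cardinal) (h : IsSubtle δ) :
    ∀ lam : Cardinal, lam < δ → 2 ^ lam < δ := by
  intro lam hlam
  by_contra! hle
  have hcard : Cardinal.mk (Set.Iio δ.ord) ≤ Cardinal.mk (Set (Set.Iio lam.ord)) := by
    rw [Cardinal.mk_Iio_ordinal, Cardinal.mk_set, Cardinal.mk_Iio_ordinal,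
      Cardinal.card_ord, Cardinal.card_ord, ← Cardinal.lift_two_power]
    exact Cardinal.lift_le.mpr hle
  obtain ⟨F⟩ := hcard
  exact h.not_injective (Cardinal.ord_lt_ord.mpr hlam) F F.injective
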